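/- In the merged route, the total waiting time accumulated from location i through the end of the second route, namely (merged end time) − a − t_{ij} − (sum of the second route's travel times), equals max(W₂(s₂) + Δ, 0), where Δ = s₂ − (a + t_{ij}) and W₂(s₂) is the second route's total waiting time at baseline start s₂. Consequently, if the first route has total waiting time W₁, the merged route's total waiting time equals W₁ + max(W₂(s₂) + Δ, 0). -/
import Mathlib


/-- Departure times along a route, 0-indexed: Lean index `k` is the paper's
location `k+1`, `t k` is the travel time from location `k` to `k+1`, `e k` is
the time-window start of location `k`. -/
noncomputable def depTime (e t : ℕ → ℝ) (s : ℝ) : ℕ → ℝ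
  | 0 => s
  | k + 1 => max (e (k + 1)) (depTime e t s k + t k)

/-- Cumulative waiting time before location `k`:
`W_k(s) = B_k(s) − s − Σ_{p<k} t_p`. -/
noncomputable def wait (e t : ℕ → ℝ) (s : ℝ) (k : ℕ) : ℝ :=
  depTime e t s k - s - ∑ p ∈ Finset.range k, t p

lemma depTime_max (e t : ℕ → ℝ) (s c : ℝ) (k : ℕ) :
    depTime e t (max s c) k = max (depTime e t s k) (c + ∑ p ∈ Finset.range k, t p) := by
  induction k with
  | zero => simp [depTime]
  | succ k ih =>
      rw [depTime, ih, depTime, Finset.sum_range_succ, ← max_add_add_right,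
        ← add_assoc, max_assoc]

/-- the first route has `m₁` locations (indices `0, …, m₁-1`,
ending at location `i`, index `m₁-1`), is started at `s₁ ≥ e₁ 0` and its
departure time at `i` is `a = B¹_{m₁-1}(s₁)`; the second route has `m₂`
locations, baseline start `s₂ ≥ e₂ 0` at its first location `j`, and in the
merged route it is started at `max s₂ (a + tij)` where `tij ≥ 0`.  With
`Δ = s₂ − (a + tij)` and `W₂` the second route's total waiting time at `s₂`:
the waiting accumulated from `i` through the end of the second route,
`(merged end) − a − tij − Σ t₂`, equals `max (W₂ + Δ) 0`, and the merged
route's total waiting time equals `W₁ + max (W₂ + Δ) 0` where `W₁` is the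
first route's total waiting time. -/
theorem stmt_7 (m₁ m₂ : ℕ) (hm₁ : 0 < m₁) (hm₂ : 0 < m₂)
    (e₁ t₁ e₂ t₂ : ℕ → ℝ) (ht₁ : ∀ p, 0 ≤ t₁ p) (ht₂ : ∀ p, 0 ≤ t₂ p)
    (s₁ s₂ tij : ℝ) (hs₁ : e₁ 0 ≤ s₁) (hs₂ : e₂ 0 ≤ s₂) (htij : 0 ≤ tij)
    (a Δ W₁ W₂ : ℝ)
    (ha : a = depTime e₁ t₁ s₁ (m₁ - 1))
    (hΔ : Δ = s₂ - (a + tij))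
    (hW₁ : W₁ = wait e₁ t₁ s₁ (m₁ - 1))
    (hW₂ : W₂ = wait e₂ t₂ s₂ (m₂ - 1)) :
    depTime e₂ t₂ (max s₂ (a + tij)) (m₂ - 1) - a - tij
        - (∑ p ∈ Finset.range (m₂ - 1), t₂ p) = max (W₂ + Δ) 0 ∧
    depTime e₂ t₂ (max s₂ (a + tij)) (m₂ - 1) - s₁
        - ((∑ p ∈ Finset.range (m₁ - 1), t₁ p) + tij
            + ∑ p ∈ Finset.range (m₂ - 1), t₂ p)
      = W₁ + max (W₂ + Δ) 0 := by
  constructor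
  · rw [depTime_max, hW₂, hΔ, wait]
    rw [← max_sub_sub_right, ← max_sub_sub_right, ← max_sub_sub_right]
    ring_nf
  · subst ha
    rw [depTime_max, hW₁, hW₂, hΔ, wait, wait]
    rw [← max_sub_sub_right, ← max_sub_sub_right, ← max_add_add_left]
    ring_nf
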